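/- Let n ≥ 5 be odd, let r_n be the rotation matrix [[cos(π/n), −sin(π/n)], [sin(π/n), cos(π/n)]], let s_n = [[1, 2·cot(π/n)], [0, 1]], and let Γ_n be the subgroup of SL(2,ℝ) generated by {r_n, s_n}. If v ∈ ℝ² \ {0} and the orbit Γ_n·v (under the standard linear action on ℝ²) is not dense in ℝ², then v is a nonzero real scalar multiple of some vector in the orbit Γ_n·(1,0). -/

import Mathlib

/-- The rotation matrix `r_n` by angle `π/n`, as an element of `SL(2,ℝ)`. -/
noncomputable def rotMat (n : ℕ) : Matrix.SpecialLinearGroup (Fin 2) ℝ :=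
  ⟨!![Real.cos (Real.pi / n), -Real.sin (Real.pi / n);
      Real.sin (Real.pi / n), Real.cos (Real.pi / n)], by
    rw [Matrix.det_fin_two_of]; nlinarith [Real.sin_sq_add_cos_sq (Real.pi / n)]⟩

/-- The shear matrix `s_n = [[1, 2·cot(π/n)], [0, 1]]`, as an element of `SL(2,ℝ)`. -/
noncomputable def shearMat (n : ℕ) : Matrix.SpecialLinearGroup (Fin 2) ℝ :=
  ⟨!![1, 2 * Real.cot (Real.pi / n); 0, 1], by simp [Matrix.det_fin_two_of]⟩

/-!
Let `H ≤ SL(2,ℝ)` contain the rotation `r` by an angle `0 < a < π/2` and the shear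
`s = [[1, 2 cot a], [0, 1]]` (for `Γ_n`, `a = π/n`). If `γ • v` is horizontal for some `γ ∈ H`,
then `v` is a multiple of `γ⁻¹ • e₁`; otherwise the orbit `H • v` is dense.

A power of `s` moves `(x, y)` to a vector with `|x| ≤ cot a · |y|`, whose length is at most
`|y| / sin a`; a power of `r` then turns it to within angle `a/2` of the horizontal axis, so its
second coordinate has shrunk by the factor `a / (2 sin a) < 1`. Iterating, the orbit of `v` comes
arbitrarily close to the horizontal axis, and after one more shear to every point `t • e₁`.
Applied to an arbitrary `w`, this makes `γ • w` tiny for some `γ ∈ H`; since `γ⁻¹ • e₁` and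
`γ⁻¹ • r • e₁` have wedge product `sin a`, one of them is not small, and as the wedge product is
`SL(2,ℝ)`-invariant the line through it passes close to `w`. So the lines `ℝ • g • e₁`, `g ∈ H`,
are dense, and they lie in the closure of the orbit of `v`.
-/

open Real Matrix
open scoped MatrixGroups

namespace Matrix.SpecialLinearGroup

noncomputable def rotation (θ : ℝ) : SL(2, ℝ) :=
  ⟨!![cos θ, -sin θ; sin θ, cos θ], by
    rw [det_fin_two_of]; nlinarith [sin_sq_add_cos_sq θ]⟩

def shear (b : ℝ) : SL(2, ℝ) :=
  ⟨!![1, b; 0, 1], by simp [det_fin_two_of]⟩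

lemma coe_rotation (θ : ℝ) :
    (rotation θ : Matrix (Fin 2) (Fin 2) ℝ) = !![cos θ, -sin θ; sin θ, cos θ] := rfl

lemma coe_shear (b : ℝ) : (shear b : Matrix (Fin 2) (Fin 2) ℝ) = !![1, b; 0, 1] := rfl

lemma rotation_smul (θ : ℝ) (u : Fin 2 → ℝ) :
    rotation θ • u = ![cos θ * u 0 - sin θ * u 1, sin θ * u 0 + cos θ * u 1] := by
  rw [SpecialLinearGroup.smul_def, coe_rotation, smul_eq_mulVec, mulVec_fin_two]
  simp only [of_apply, cons_val', cons_val_zero, cons_val_one, empty_val', cons_val_fin_one]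
  ring_nf

lemma shear_smul (b : ℝ) (u : Fin 2 → ℝ) : shear b • u = ![u 0 + b * u 1, u 1] := by
  rw [SpecialLinearGroup.smul_def, coe_shear, smul_eq_mulVec, mulVec_fin_two]
  simp

lemma rotation_add (θ φ : ℝ) : rotation (θ + φ) = rotation θ * rotation φ := by
  ext : 1
  rw [coe_mul, coe_rotation, coe_rotation, coe_rotation, mul_fin_two, cos_add, sin_add]
  ring_nf

lemma shear_add (b c : ℝ) : shear (b + c) = shear b * shear c := by
  ext : 1
  rw [coe_mul, coe_shear, coe_shear, coe_shear, mul_fin_two]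
  simp [add_comm]

lemma zpow_eq_of_map_add {G : Type*} [Group G] {f : ℝ → G}
    (hf : ∀ x y, f (x + y) = f x * f y) (x : ℝ) (m : ℤ) : f x ^ m = f (m * x) := by
  have h := (AddMonoidHom.mk' (fun x => Additive.ofMul (f x)) hf).map_zsmul m x
  simp only [zsmul_eq_mul] at h
  exact (congrArg Additive.toMul h).symm

lemma rotation_zpow (θ : ℝ) (m : ℤ) : rotation θ ^ m = rotation (m * θ) :=
  zpow_eq_of_map_add rotation_add θ m

lemma shear_zpow (b : ℝ) (m : ℤ) : shear b ^ m = shear (m * b) :=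
  zpow_eq_of_map_add shear_add b m

def wedge (p q : Fin 2 → ℝ) : ℝ := p 0 * q 1 - p 1 * q 0

lemma wedge_smul_smul (A : SL(2, ℝ)) (p q : Fin 2 → ℝ) : wedge (A • p) (A • q) = wedge p q := by
  have hA := A.det_coe
  rw [det_fin_two] at hA
  simp only [wedge, SpecialLinearGroup.smul_def, smul_eq_mulVec, mulVec, dotProduct,
    Fin.sum_univ_two]
  linear_combination (p 0 * q 1 - p 1 * q 0) * hA

lemma abs_wedge_le (p q : Fin 2 → ℝ) : |wedge p q| ≤ 2 * ‖p‖ * ‖q‖ := by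
  have hp : ∀ i, |p i| ≤ ‖p‖ := fun i => norm_le_pi_norm p i
  have hq : ∀ i, |q i| ≤ ‖q‖ := fun i => norm_le_pi_norm q i
  calc |wedge p q| ≤ |p 0| * |q 1| + |p 1| * |q 0| := by
        rw [← abs_mul, ← abs_mul]; exact abs_sub _ _
    _ ≤ ‖p‖ * ‖q‖ + ‖p‖ * ‖q‖ := by
        gcongr <;> first | exact hp _ | exact hq _
    _ = 2 * ‖p‖ * ‖q‖ := by ring

lemma le_norm_or_le_norm_of_le_abs_wedge {p q : Fin 2 → ℝ} {s : ℝ} (h : s ≤ |wedge p q|) :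
    √(s / 2) ≤ ‖p‖ ∨ √(s / 2) ≤ ‖q‖ := by
  by_contra! hlt
  have hs : 0 < s / 2 := sqrt_pos.1 ((norm_nonneg p).trans_lt hlt.1)
  have hsq := sq_sqrt hs.le
  have := abs_wedge_le p q
  nlinarith [mul_lt_mul'' hlt.1 hlt.2 (norm_nonneg p) (norm_nonneg q)]

lemma exists_norm_smul_sub_le (p w : Fin 2 → ℝ) (hp : p ≠ 0) :
    ∃ t : ℝ, ‖t • p - w‖ ≤ |wedge p w| / ‖p‖ := by
  set D := p 0 ^ 2 + p 1 ^ 2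
  have hpos : 0 < ‖p‖ := norm_pos_iff.2 hp
  have hcoord : ∀ i, |p i| ≤ ‖p‖ := fun i => norm_le_pi_norm p i
  have hD : ‖p‖ ^ 2 ≤ D := by
    have : ‖p‖ ≤ √D := (pi_norm_le_iff_of_nonneg (sqrt_nonneg D)).2 fun i => by
      fin_cases i <;> apply abs_le_sqrt <;> simp [D, sq_nonneg]
    calc ‖p‖ ^ 2 ≤ √D ^ 2 := by gcongr
      _ = D := sq_sqrt (by positivity)
  have hDpos : 0 < D := lt_of_lt_of_le (by positivity) hD
  have hbound : ∀ i, |p i * wedge p w / D| ≤ |wedge p w| / ‖p‖ := fun i => by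
    rw [abs_div, abs_mul, abs_of_pos hDpos, div_le_div_iff₀ hDpos hpos]
    have : |p i| * ‖p‖ ≤ D := by nlinarith [hcoord i, abs_nonneg (p i)]
    nlinarith [abs_nonneg (wedge p w)]
  set t := (p 0 * w 0 + p 1 * w 1) / D
  have h0 : t * p 0 - w 0 = p 1 * wedge p w / D := by
    simp only [t, wedge]; field_simp; ring
  have h1 : t * p 1 - w 1 = -(p 0 * wedge p w / D) := by
    simp only [t, wedge]; field_simp; ring
  refine ⟨t, (pi_norm_le_iff_of_nonneg (by positivity)).2 (Fin.forall_fin_two.2 ⟨?_, ?_⟩)⟩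
  · simpa only [Pi.sub_apply, Pi.smul_apply, smul_eq_mul, Real.norm_eq_abs, h0] using hbound 1
  · simpa only [Pi.sub_apply, Pi.smul_apply, smul_eq_mul, Real.norm_eq_abs, h1, abs_neg]
      using hbound 0

lemma exists_norm_smul_inv_smul_sub_le (γ : SL(2, ℝ)) (p w : Fin 2 → ℝ) (hp : γ⁻¹ • p ≠ 0) :
    ∃ t : ℝ, ‖t • γ⁻¹ • p - w‖ ≤ 2 * ‖p‖ * ‖γ • w‖ / ‖γ⁻¹ • p‖ := by
  obtain ⟨t, ht⟩ := exists_norm_smul_sub_le (γ⁻¹ • p) w hp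
  refine ⟨t, ht.trans ?_⟩
  rw [← wedge_smul_smul γ, smul_inv_smul]
  gcongr
  exact abs_wedge_le p (γ • w)

lemma eq_smul_inv_smul_of_snd_smul_eq_zero {γ : SL(2, ℝ)} {v : Fin 2 → ℝ} (h : (γ • v) 1 = 0) :
    v = (γ • v) 0 • γ⁻¹ • ![1, 0] := by
  rw [← smul_comm]
  conv_lhs => rw [← inv_smul_smul γ v]
  congr 1
  ext i
  fin_cases i <;> simp [h]

lemma exists_int_abs_add_mul_le (x : ℝ) {c : ℝ} (hc : c ≠ 0) : ∃ m : ℤ, |x + m * c| ≤ |c| / 2 := by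
  refine ⟨-round (x / c), ?_⟩
  calc |x + ↑(-round (x / c)) * c| = |c| * |x / c - round (x / c)| := by
        rw [← abs_mul]; congr 1; push_cast; field_simp; ring
    _ ≤ |c| * (1 / 2) := by gcongr; exact abs_sub_round _
    _ = |c| / 2 := by ring

lemma exists_rotation_zpow_abs_snd_smul_le {a : ℝ} (ha : 0 < a) (u : Fin 2 → ℝ) :
    ∃ m : ℤ, |(rotation a ^ m • u) 1| ≤ a / 2 * √(u 0 ^ 2 + u 1 ^ 2) := by
  set z : ℂ := ⟨u 0, u 1⟩
  obtain ⟨m, hm⟩ := exists_int_abs_add_mul_le z.arg ha.ne'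
  refine ⟨m, ?_⟩
  have hsnd : (rotation a ^ m • u) 1 = ‖z‖ * sin (z.arg + m * a) := by
    have hre : ‖z‖ * cos z.arg = u 0 := Complex.norm_mul_cos_arg z
    have him : ‖z‖ * sin z.arg = u 1 := Complex.norm_mul_sin_arg z
    rw [rotation_zpow, rotation_smul, sin_add]
    simp only [cons_val_one, cons_val_zero]
    linear_combination (-sin (m * a)) * hre - cos (m * a) * him
  rw [hsnd, abs_mul, Complex.norm_eq_sqrt_sq_add_sq, abs_of_nonneg (sqrt_nonneg _), mul_comm]
  gcongr
  exact abs_sin_le_abs.trans (hm.trans_eq (by rw [abs_of_pos ha]))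

lemma sqrt_sq_add_sq_le {a x y : ℝ} (hs : 0 < sin a) (h : |x| ≤ cot a * |y|) :
    √(x ^ 2 + y ^ 2) ≤ |y| / sin a := by
  rw [sqrt_le_left (by positivity)]
  have hx : x ^ 2 ≤ (cot a * |y|) ^ 2 := by
    rw [← sq_abs x]; gcongr
  calc x ^ 2 + y ^ 2 ≤ (cot a * |y|) ^ 2 + y ^ 2 := by gcongr
    _ = (|y| / sin a) ^ 2 := by
        rw [cot_eq_cos_div_sin]; field_simp; rw [sq_abs]
        linear_combination y ^ 2 * sin_sq_add_cos_sq a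

lemma lt_two_mul_sin {a : ℝ} (ha : 0 < a) (ha' : a ≤ π / 2) : a < 2 * sin a := by
  have h4 : 1 < 4 / π := (one_lt_div pi_pos).2 pi_lt_four
  calc a < 4 / π * a := lt_mul_left ha h4
    _ = 2 * (2 / π * a) := by ring
    _ ≤ 2 * sin a := by gcongr; exact mul_le_sin ha.le ha'

lemma cot_pos_of_pos_of_lt_pi_div_two {a : ℝ} (ha : 0 < a) (ha' : a < π / 2) : 0 < cot a := by
  rw [cot_eq_cos_div_sin]
  exact div_pos (cos_pos_of_mem_Ioo ⟨by linarith, ha'⟩)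
    (sin_pos_of_pos_of_lt_pi ha (by linarith [pi_pos]))

section Orbit

variable {H : Subgroup SL(2, ℝ)} {a : ℝ}

lemma exists_mem_shear_smul {b : ℝ} (hb : b ≠ 0) (hshear : shear b ∈ H) {u : Fin 2 → ℝ}
    (hu : u 1 ≠ 0) (t : ℝ) : ∃ σ ∈ H, (σ • u) 1 = u 1 ∧ |(σ • u) 0 - t| ≤ |b| / 2 * |u 1| := by
  obtain ⟨m, hm⟩ := exists_int_abs_add_mul_le (u 0 - t) (mul_ne_zero hb hu)
  refine ⟨shear b ^ m, zpow_mem hshear m, ?_, ?_⟩ <;>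
    simp only [shear_zpow, shear_smul, cons_val_one, cons_val_zero]
  calc |u 0 + m * b * u 1 - t| = |u 0 - t + m * (b * u 1)| := by ring_nf
    _ ≤ |b * u 1| / 2 := hm
    _ = |b| / 2 * |u 1| := by rw [abs_mul]; ring

lemma exists_mem_shear_smul_of_cot (ha : 0 < a) (ha' : a < π / 2)
    (hshear : shear (2 * cot a) ∈ H) {u : Fin 2 → ℝ} (hu : u 1 ≠ 0) (t : ℝ) :
    ∃ σ ∈ H, (σ • u) 1 = u 1 ∧ |(σ • u) 0 - t| ≤ cot a * |u 1| := by
  have hcot := cot_pos_of_pos_of_lt_pi_div_two ha ha'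
  have h := exists_mem_shear_smul (by positivity) hshear hu t
  rwa [abs_of_pos (mul_pos two_pos hcot), mul_div_cancel_left₀ _ two_ne_zero] at h

lemma exists_mem_abs_snd_smul_le (ha : 0 < a) (ha' : a < π / 2) (hrot : rotation a ∈ H)
    (hshear : shear (2 * cot a) ∈ H) (u : Fin 2 → ℝ) :
    ∃ γ ∈ H, |(γ • u) 1| ≤ a / (2 * sin a) * |u 1| := by
  by_cases hu : u 1 = 0
  · exact ⟨1, one_mem H, by simp [hu]⟩
  have hs : 0 < sin a := sin_pos_of_pos_of_lt_pi ha (by linarith [pi_pos])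
  obtain ⟨σ, hσ, h1, h0⟩ := exists_mem_shear_smul_of_cot ha ha' hshear hu 0
  obtain ⟨m, hm⟩ := exists_rotation_zpow_abs_snd_smul_le ha (σ • u)
  refine ⟨rotation a ^ m * σ, mul_mem (zpow_mem hrot m) hσ, ?_⟩
  rw [mul_smul]
  calc _ ≤ a / 2 * √((σ • u) 0 ^ 2 + (σ • u) 1 ^ 2) := hm
    _ ≤ a / 2 * (|u 1| / sin a) := by
        rw [sub_zero, ← h1] at h0
        rw [← h1]
        gcongr
        exact sqrt_sq_add_sq_le hs h0
    _ = a / (2 * sin a) * |u 1| := by field_simp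

lemma exists_mem_abs_snd_smul_lt (ha : 0 < a) (ha' : a < π / 2) (hrot : rotation a ∈ H)
    (hshear : shear (2 * cot a) ∈ H) (u : Fin 2 → ℝ) {ε : ℝ} (hε : 0 < ε) :
    ∃ γ ∈ H, |(γ • u) 1| < ε := by
  set κ := a / (2 * sin a)
  have hs : 0 < sin a := sin_pos_of_pos_of_lt_pi ha (by linarith [pi_pos])
  have hκ : κ < 1 := (div_lt_one (by positivity)).2 (lt_two_mul_sin ha ha'.le)
  have hpow : ∀ k : ℕ, ∃ γ ∈ H, |(γ • u) 1| ≤ κ ^ k * |u 1| := by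
    intro k
    induction k with
    | zero => exact ⟨1, one_mem H, by simp⟩
    | succ k ih =>
      obtain ⟨γ, hγ, hk⟩ := ih
      obtain ⟨γ', hγ', h'⟩ := exists_mem_abs_snd_smul_le ha ha' hrot hshear (γ • u)
      refine ⟨γ' * γ, mul_mem hγ' hγ, ?_⟩
      rw [mul_smul, pow_succ', mul_assoc]
      exact h'.trans (by gcongr)
  obtain ⟨k, hk⟩ := exists_pow_lt_of_lt_one (div_pos hε (by positivity : 0 < |u 1| + 1)) hκ
  obtain ⟨γ, hγ, h⟩ := hpow k
  refine ⟨γ, hγ, h.trans_lt ?_⟩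
  rw [lt_div_iff₀ (by positivity)] at hk
  nlinarith [pow_nonneg (by positivity : 0 ≤ κ) k]

lemma exists_mem_norm_smul_sub_lt (ha : 0 < a) (ha' : a < π / 2) (hrot : rotation a ∈ H)
    (hshear : shear (2 * cot a) ∈ H) {v : Fin 2 → ℝ} (hv : ∀ γ ∈ H, (γ • v) 1 ≠ 0) (t : ℝ)
    {δ : ℝ} (hδ : 0 < δ) : ∃ γ ∈ H, ‖γ • v - t • ![1, 0]‖ < δ := by
  have hcot := cot_pos_of_pos_of_lt_pi_div_two ha ha'
  obtain ⟨γ, hγ, hy⟩ :=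
    exists_mem_abs_snd_smul_lt ha ha' hrot hshear v (div_pos hδ (by positivity : 0 < 1 + cot a))
  obtain ⟨σ, hσ, h1, h0⟩ := exists_mem_shear_smul_of_cot ha ha' hshear (hv γ hγ) t
  rw [lt_div_iff₀ (by positivity)] at hy
  refine ⟨σ * γ, mul_mem hσ hγ, (pi_norm_lt_iff hδ).2 (Fin.forall_fin_two.2 ⟨?_, ?_⟩)⟩
  · simp only [Pi.sub_apply, Pi.smul_apply, mul_smul, Real.norm_eq_abs, cons_val_zero,
      smul_eq_mul, mul_one]
    nlinarith [abs_nonneg ((γ • v) 1)]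
  · simp only [Pi.sub_apply, Pi.smul_apply, mul_smul, Real.norm_eq_abs, cons_val_one,
      cons_val_zero, smul_eq_mul, mul_zero, sub_zero, h1]
    nlinarith [abs_nonneg ((γ • v) 1)]

lemma exists_mem_norm_smul_smul_sub_lt (ha : 0 < a) (ha' : a < π / 2) (hrot : rotation a ∈ H)
    (hshear : shear (2 * cot a) ∈ H) {w : Fin 2 → ℝ} (hw : ∀ γ ∈ H, (γ • w) 1 ≠ 0) {ε : ℝ}
    (hε : 0 < ε) : ∃ g ∈ H, ∃ t : ℝ, ‖t • g • ![1, 0] - w‖ < ε := by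
  have hs : 0 < sin a := sin_pos_of_pos_of_lt_pi ha (by linarith [pi_pos])
  set ρ := √(sin a / 2)
  have hρ : 0 < ρ := sqrt_pos.2 (by positivity)
  obtain ⟨γ, hγ, hγw⟩ :=
    exists_mem_norm_smul_sub_lt ha ha' hrot hshear hw 0 (by positivity : 0 < ε * ρ / 2)
  rw [zero_smul, sub_zero] at hγw
  have hline : ∀ p : Fin 2 → ℝ, ‖p‖ ≤ 1 → ρ ≤ ‖γ⁻¹ • p‖ → ∃ t : ℝ, ‖t • γ⁻¹ • p - w‖ < ε := by
    intro p hp hρp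
    obtain ⟨t, ht⟩ := exists_norm_smul_inv_smul_sub_le γ p w (norm_pos_iff.1 (hρ.trans_le hρp))
    refine ⟨t, ht.trans_lt ?_⟩
    rw [div_lt_iff₀ (hρ.trans_le hρp)]
    calc 2 * ‖p‖ * ‖γ • w‖ ≤ 2 * 1 * ‖γ • w‖ := by gcongr
      _ < ε * ρ := by linarith
      _ ≤ ε * ‖γ⁻¹ • p‖ := by gcongr
  have hwedge : sin a ≤ |wedge (γ⁻¹ • ![1, 0]) (γ⁻¹ • rotation a • ![1, 0])| := by
    rw [wedge_smul_smul, rotation_smul]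
    simp [wedge, abs_of_pos hs]
  rcases le_norm_or_le_norm_of_le_abs_wedge hwedge with h | h
  · have hp : ‖(![1, 0] : Fin 2 → ℝ)‖ ≤ 1 := by
      rw [pi_norm_le_iff_of_nonneg zero_le_one, Fin.forall_fin_two]
      simp
    obtain ⟨t, ht⟩ := hline _ hp h
    exact ⟨γ⁻¹, inv_mem hγ, t, ht⟩
  · have hp : ‖rotation a • ![(1 : ℝ), 0]‖ ≤ 1 := by
      rw [rotation_smul, pi_norm_le_iff_of_nonneg zero_le_one, Fin.forall_fin_two]
      simp [abs_cos_le_one, abs_sin_le_one]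
    obtain ⟨t, ht⟩ := hline _ hp h
    exact ⟨γ⁻¹ * rotation a, mul_mem (inv_mem hγ) hrot, t, by rwa [mul_smul]⟩

lemma dense_smul_orbit_e1 (ha : 0 < a) (ha' : a < π / 2) (hrot : rotation a ∈ H)
    (hshear : shear (2 * cot a) ∈ H) :
    Dense {w : Fin 2 → ℝ | ∃ g ∈ H, ∃ t : ℝ, w = t • g • ![1, 0]} := by
  rw [Metric.dense_iff]
  intro w ε hε
  suffices ∃ g ∈ H, ∃ t : ℝ, ‖t • g • ![1, 0] - w‖ < ε by
    obtain ⟨g, hg, t, h⟩ := this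
    exact ⟨_, by rwa [Metric.mem_ball, dist_eq_norm], g, hg, t, rfl⟩
  by_cases hw : ∃ γ ∈ H, (γ • w) 1 = 0
  · obtain ⟨γ, hγ, h0⟩ := hw
    refine ⟨γ⁻¹, inv_mem hγ, (γ • w) 0, ?_⟩
    rwa [← eq_smul_inv_smul_of_snd_smul_eq_zero h0, sub_self, norm_zero]
  · push Not at hw
    exact exists_mem_norm_smul_smul_sub_lt ha ha' hrot hshear hw hε

theorem dense_orbit_of_forall_snd_smul_ne_zero (ha : 0 < a) (ha' : a < π / 2)
    (hrot : rotation a ∈ H) (hshear : shear (2 * cot a) ∈ H) {v : Fin 2 → ℝ}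
    (hv : ∀ γ ∈ H, (γ • v) 1 ≠ 0) : Dense {w | ∃ γ ∈ H, w = γ • v} := by
  set O := {w | ∃ γ ∈ H, w = γ • v}
  have hline (t : ℝ) : t • ![1, 0] ∈ closure O :=
    Metric.mem_closure_iff.2 fun δ hδ => by
      obtain ⟨γ, hγ, h⟩ := exists_mem_norm_smul_sub_lt ha ha' hrot hshear hv t hδ
      exact ⟨γ • v, ⟨γ, hγ, rfl⟩, by rwa [dist_comm, dist_eq_norm]⟩
  have hcont (g : SL(2, ℝ)) : Continuous fun x : Fin 2 → ℝ => g • x :=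
    continuous_const.matrix_mulVec continuous_id
  refine dense_closure.1 ((dense_smul_orbit_e1 ha ha' hrot hshear).mono ?_)
  rintro _ ⟨g, hg, t, rfl⟩
  rw [← smul_comm]
  exact map_mem_closure (hcont g) (hline t) fun _ ⟨γ, hγ, h⟩ =>
    ⟨g * γ, mul_mem hg hγ, by rw [h, mul_smul]⟩

end Orbit

end Matrix.SpecialLinearGroup

open Matrix.SpecialLinearGroup

theorem non_dense_orbit_odd_general (n : ℕ) (hn : 5 ≤ n) (v : Fin 2 → ℝ) (hv : v ≠ 0)
    (hnd : ¬ Dense {w : Fin 2 → ℝ | ∃ A ∈ Subgroup.closure {rotMat n, shearMat n},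
      w = Matrix.mulVec (A : Matrix (Fin 2) (Fin 2) ℝ) v}) :
    ∃ (c : ℝ) (A : Matrix.SpecialLinearGroup (Fin 2) ℝ), c ≠ 0 ∧
      A ∈ Subgroup.closure {rotMat n, shearMat n} ∧
      v = c • Matrix.mulVec (A : Matrix (Fin 2) (Fin 2) ℝ) ![1, 0] := by
  have ha : 0 < π / n := by positivity
  have ha' : π / n < π / 2 :=
    div_lt_div_of_pos_left pi_pos two_pos (by exact_mod_cast (by omega : 2 < n))
  have hrot : rotation (π / n) ∈ Subgroup.closure {rotMat n, shearMat n} :=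
    Subgroup.subset_closure (Set.mem_insert _ _)
  have hshear : shear (2 * cot (π / n)) ∈ Subgroup.closure {rotMat n, shearMat n} :=
    Subgroup.subset_closure (Set.mem_insert_of_mem _ rfl)
  by_cases h : ∃ γ ∈ Subgroup.closure {rotMat n, shearMat n}, (γ • v) 1 = 0
  · obtain ⟨γ, hγ, h0⟩ := h
    have hv' := eq_smul_inv_smul_of_snd_smul_eq_zero h0
    exact ⟨(γ • v) 0, γ⁻¹, fun hc => hv (by rw [hv', hc, zero_smul]), inv_mem hγ, hv'⟩
  · push Not at h
    exact absurd (dense_orbit_of_forall_snd_smul_ne_zero ha ha' hrot hshear h) hnd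

/-- For odd `n ≥ 5`, let `Γ_n ≤ SL(2,ℝ)` be generated by `r_n` and `s_n` (the Veech group of
the double `n`-gon surface). If `v ∈ ℝ² \ {0}` has non-dense `Γ_n`-orbit under the standard
linear action on `ℝ²`, then `v` is a nonzero scalar multiple of a vector in `Γ_n · (1,0)`. -/
theorem non_dense_orbit_odd (n : ℕ) (hn : 5 ≤ n) (hodd : Odd n) (v : Fin 2 → ℝ) (hv : v ≠ 0)
    (hnd : ¬ Dense {w : Fin 2 → ℝ | ∃ A ∈ Subgroup.closure {rotMat n, shearMat n},
      w = Matrix.mulVec (A : Matrix (Fin 2) (Fin 2) ℝ) v}) :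
    ∃ (c : ℝ) (A : Matrix.SpecialLinearGroup (Fin 2) ℝ), c ≠ 0 ∧
      A ∈ Subgroup.closure {rotMat n, shearMat n} ∧
      v = c • Matrix.mulVec (A : Matrix (Fin 2) (Fin 2) ℝ) ![1, 0] :=
  non_dense_orbit_odd_general n hn v hv hnd
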